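/- With the operators of the Y(sl₂) evaluation module V_m(a), the relation [x_{k+1}⁺, x_l⁺] - [x_k⁺, x_{l+1}⁺] = x_k⁺ x_l⁺ + x_l⁺ x_k⁺ holds: for all 0 ≤ s ≤ m and nonnegative integers k, l, one has (x_{k+1}⁺ x_l⁺ - x_l⁺ x_{k+1}⁺ - x_k⁺ x_{l+1}⁺ + x_{l+1}⁺ x_k⁺) w_s = (x_k⁺ x_l⁺ + x_l⁺ x_k⁺) w_s. -/
import Mathlib


noncomputable section

/-- Basis vector `w s` of the evaluation module, indexed by `ℤ`, supported on `0 ≤ s ≤ m`. -/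
def w (s : ℤ) : ℤ → ℂ := fun t => if t = s then 1 else 0

/-- Raising operator `x_k⁺ : w_s ↦ (s+a)^k (s+1) w_{s+1}`, with `x_k⁺ w_m = 0`. -/
def xplus (m : ℕ) (a : ℂ) (k : ℕ) (v : ℤ → ℂ) : ℤ → ℂ :=
  fun s => if 1 ≤ s ∧ s ≤ (m : ℤ) then ((s : ℂ) - 1 + a) ^ k * (s : ℂ) * v (s - 1) else 0

/-- The Yangian relation
`[x_{k+1}⁺, x_l⁺] - [x_k⁺, x_{l+1}⁺] = x_k⁺ x_l⁺ + x_l⁺ x_k⁺` holds on every basis vector. -/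
theorem yangian_plus_relation (m : ℕ) (hm : 1 ≤ m) (a : ℂ) (k l : ℕ) (s : ℤ)
    (hs0 : 0 ≤ s) (hsm : s ≤ (m : ℤ)) :
    xplus m a (k+1) (xplus m a l (w s)) - xplus m a l (xplus m a (k+1) (w s))
      - xplus m a k (xplus m a (l+1) (w s)) + xplus m a (l+1) (xplus m a k (w s))
      = xplus m a k (xplus m a l (w s)) + xplus m a l (xplus m a k (w s)) := by
  funext t
  simp only [xplus, w, Pi.add_apply, Pi.sub_apply]
  split_ifs <;> push_cast <;> ring
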